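/- Let X be a compact topological space and let φ : X → ℝ be any function. For each integer j ≥ 1 let (ψ_{j,k})_{k ≥ 1} be a sequence of continuous real-valued functions on X that is non-increasing in k and converges pointwise, as k → ∞, to max(φ, −j). Then there exists a strictly increasing sequence of indices (k_j) such that, setting φ̃_j = ψ_{j,k_j} + 2^{−j}, one has φ̃_{j+1}(x) ≤ φ̃_j(x) for all x ∈ X and all j ≥ 1, and φ̃_j(x) → φ(x) as j → ∞ for every x ∈ X. -/

import Mathlib

/-!
The index `k_{j+1}` is chosen by a Dini-type compactness argument: since `ψ_{j+1,k}` decreases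
to `max(φ, -(j+1))`, it eventually lies uniformly below `g + 2^{-(j+1)}` for any continuous
`g ≥ max(φ, -j)`. Applying this to the finitely many functions `g = ψ_{j,k_j}` and
`g = ψ_{l,j}` (`l ≤ j`) gives both the monotonicity of `φ̃_j = ψ_{j,k_j} + 2^{-j}` and the bound
`φ̃_{j+1}(x) ≤ ψ_{l,j}(x) + 2^{-j} → max(φ(x), -l)`, which equals `φ(x)` once `l ≥ -φ(x)`;
from below, `φ̃_j ≥ φ + 2^{-j}`.
-/

open Filter Topology

theorem Antitone.eventually_forall_lt_of_forall_tendsto {ι X α : Type*} [Preorder ι]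
    [TopologicalSpace X] [CompactSpace X] [TopologicalSpace α] [LinearOrder α]
    [OrderClosedTopology α] {F : ι → X → α} {f g : X → α} (hF_cont : ∀ i, Continuous (F i))
    (hF_anti : Antitone F) (hg : Continuous g) (h_tendsto : ∀ x, Tendsto (F · x) atTop (𝓝 (f x)))
    (hfg : ∀ x, f x < g x) :
    ∀ᶠ i in atTop, ∀ x, F i x < g x := by
  rcases (atTop : Filter ι).eq_or_neBot with h | _
  · simp [h]
  suffices ∀ᶠ i in atTop, ∀ x ∈ Set.univ, F i x < g x by simpa using this
  refine isCompact_univ.induction_on (p := fun s => ∀ᶠ i in atTop, ∀ x ∈ s, F i x < g x)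
    (by simp) (fun s t hst ht => ht.mono fun i hi x hx => hi x (hst hx))
    (fun s t hs ht => (hs.and ht).mono fun i hi x hx => hx.elim (hi.1 x) (hi.2 x))
    fun x _ => ?_
  obtain ⟨i₀, hi₀⟩ := ((h_tendsto x).eventually_lt_const (hfg x)).exists
  refine ⟨{y | F i₀ y < g y},
    mem_nhdsWithin_of_mem_nhds ((isOpen_lt (hF_cont i₀) hg).mem_nhds hi₀), ?_⟩
  filter_upwards [eventually_ge_atTop i₀] with i hi y hy
  exact (hF_anti hi y).trans_lt hy

theorem exists_strictMono_forall_rel_succ_of_eventually {R : ℕ → ℕ → ℕ → Prop}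
    (h : ∀ j m, ∀ᶠ K in atTop, R j m K) :
    ∃ k : ℕ → ℕ, StrictMono k ∧ ∀ j, R j (k j) (k (j + 1)) := by
  choose F hF_gt hF using fun j m => ((eventually_gt_atTop m).and (h j m)).exists
  let k : ℕ → ℕ := fun n => Nat.rec 0 F n
  exact ⟨k, strictMono_nat_of_lt_succ fun j => hF_gt j (k j), fun j => hF j (k j)⟩

theorem inv_two_pow_succ_add_self (n : ℕ) :
    ((2 : ℝ) ^ (n + 1))⁻¹ + ((2 : ℝ) ^ (n + 1))⁻¹ = ((2 : ℝ) ^ n)⁻¹ := by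
  rw [pow_succ, mul_inv, ← div_eq_mul_inv, add_halves]

section DecreasingApproximation

variable {X : Type*} {φ : X → ℝ} {ψ : ℕ → ℕ → X → ℝ}

theorem max_neg_le_of_antitone_of_tendsto
    (hanti : ∀ j, 1 ≤ j → ∀ x : X, ∀ k l : ℕ, 1 ≤ k → k ≤ l → ψ j l x ≤ ψ j k x)
    (hlim : ∀ j, 1 ≤ j → ∀ x : X,
      Tendsto (fun k => ψ j k x) atTop (𝓝 (max (φ x) (-(j : ℝ)))))
    {j k : ℕ} (hj : 1 ≤ j) (hk : 1 ≤ k) (x : X) :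
    max (φ x) (-(j : ℝ)) ≤ ψ j k x :=
  le_of_tendsto (hlim j hj x) <|
    (eventually_ge_atTop k).mono fun _ hl => hanti j hj x k _ hk hl

theorem eventually_forall_add_inv_two_pow_le [TopologicalSpace X] [CompactSpace X]
    (hcont : ∀ j, 1 ≤ j → ∀ k, 1 ≤ k → Continuous (ψ j k))
    (hanti : ∀ j, 1 ≤ j → ∀ x : X, ∀ k l : ℕ, 1 ≤ k → k ≤ l → ψ j l x ≤ ψ j k x)
    (hlim : ∀ j, 1 ≤ j → ∀ x : X,
      Tendsto (fun k => ψ j k x) atTop (𝓝 (max (φ x) (-(j : ℝ)))))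
    {j : ℕ} (hj : 1 ≤ j) {g : X → ℝ} (hg : Continuous g)
    (hφg : ∀ x, max (φ x) (-(j : ℝ)) ≤ g x) :
    ∀ᶠ K in atTop, ∀ x,
      ψ (j + 1) K x + ((2 : ℝ) ^ (j + 1))⁻¹ ≤ g x + ((2 : ℝ) ^ j)⁻¹ := by
  have hj' : 1 ≤ j + 1 := by omega
  have hlt : ∀ x, max (φ x) (-((j + 1 : ℕ) : ℝ)) < g x + ((2 : ℝ) ^ (j + 1))⁻¹ := fun x =>
    calc max (φ x) (-((j + 1 : ℕ) : ℝ)) ≤ max (φ x) (-(j : ℝ)) := by gcongr; simp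
      _ ≤ g x := hφg x
      _ < g x + ((2 : ℝ) ^ (j + 1))⁻¹ := by simp
  -- The hypotheses only concern indices `k ≥ 1`, hence the shift `K ↦ K + 1`.
  have hshift := Antitone.eventually_forall_lt_of_forall_tendsto (F := fun K => ψ (j + 1) (K + 1))
    (g := fun x => g x + ((2 : ℝ) ^ (j + 1))⁻¹)
    (fun K => hcont _ hj' _ (by omega)) (fun a b hab x => hanti _ hj' x _ _ (by omega) (by omega))
    (hg.add continuous_const) (fun x => (tendsto_add_atTop_iff_nat 1).2 (hlim _ hj' x)) hlt
  rw [← map_add_atTop_eq_nat 1, eventually_map]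
  filter_upwards [hshift] with K hK x
  linarith [hK x, inv_two_pow_succ_add_self j]

theorem eventually_imp_forall_add_inv_two_pow_le [TopologicalSpace X] [CompactSpace X]
    (hcont : ∀ j, 1 ≤ j → ∀ k, 1 ≤ k → Continuous (ψ j k))
    (hanti : ∀ j, 1 ≤ j → ∀ x : X, ∀ k l : ℕ, 1 ≤ k → k ≤ l → ψ j l x ≤ ψ j k x)
    (hlim : ∀ j, 1 ≤ j → ∀ x : X,
      Tendsto (fun k => ψ j k x) atTop (𝓝 (max (φ x) (-(j : ℝ)))))
    (j m : ℕ) :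
    ∀ᶠ K in atTop, 1 ≤ j → 1 ≤ m →
      (∀ x, ψ (j + 1) K x + ((2 : ℝ) ^ (j + 1))⁻¹ ≤ ψ j m x + ((2 : ℝ) ^ j)⁻¹) ∧
      ∀ l ∈ Finset.Icc 1 j, ∀ x,
        ψ (j + 1) K x + ((2 : ℝ) ^ (j + 1))⁻¹ ≤ ψ l j x + ((2 : ℝ) ^ j)⁻¹ := by
  simp only [eventually_imp_distrib_left]
  intro hj hm
  refine (eventually_forall_add_inv_two_pow_le hcont hanti hlim hj (hcont j hj m hm)
    (max_neg_le_of_antitone_of_tendsto hanti hlim hj hm)).and ?_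
  rw [eventually_all_finset]
  intro l hl
  obtain ⟨hl1, hlj⟩ := Finset.mem_Icc.1 hl
  refine eventually_forall_add_inv_two_pow_le hcont hanti hlim hj (hcont l hl1 j hj) fun x => ?_
  calc max (φ x) (-(j : ℝ)) ≤ max (φ x) (-(l : ℝ)) := by gcongr
    _ ≤ ψ l j x := max_neg_le_of_antitone_of_tendsto hanti hlim hl1 hj x

theorem tendsto_add_inv_two_pow_of_le
    (hanti : ∀ j, 1 ≤ j → ∀ x : X, ∀ k l : ℕ, 1 ≤ k → k ≤ l → ψ j l x ≤ ψ j k x)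
    (hlim : ∀ j, 1 ≤ j → ∀ x : X,
      Tendsto (fun k => ψ j k x) atTop (𝓝 (max (φ x) (-(j : ℝ)))))
    {k : ℕ → ℕ} (hk : ∀ j, 1 ≤ j → 1 ≤ k j)
    (hle : ∀ j, ∀ l ∈ Finset.Icc 1 j, ∀ x,
      ψ (j + 1) (k (j + 1)) x + ((2 : ℝ) ^ (j + 1))⁻¹ ≤ ψ l j x + ((2 : ℝ) ^ j)⁻¹)
    (x : X) :
    Tendsto (fun j => ψ j (k j) x + ((2 : ℝ) ^ j)⁻¹) atTop (𝓝 (φ x)) := by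
  have hc : Tendsto (fun n : ℕ => ((2 : ℝ) ^ n)⁻¹) atTop (𝓝 0) :=
    tendsto_inv_atTop_zero.comp (tendsto_pow_atTop_atTop_of_one_lt one_lt_two)
  obtain ⟨l, hl⟩ := exists_nat_ge (-φ x)
  have hl1 : 1 ≤ l + 1 := by omega
  have hmax : max (φ x) (-((l + 1 : ℕ) : ℝ)) = φ x := max_eq_left (by push_cast; linarith)
  rw [← tendsto_add_atTop_iff_nat 1]
  refine tendsto_of_tendsto_of_tendsto_of_le_of_le' (g := fun j => φ x + ((2 : ℝ) ^ (j + 1))⁻¹)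
    (h := fun j => ψ (l + 1) j x + ((2 : ℝ) ^ j)⁻¹) ?_ ?_ ?_ ?_
  · simpa using tendsto_const_nhds.add ((tendsto_add_atTop_iff_nat 1).2 hc)
  · simpa only [hmax, add_zero] using (hlim _ hl1 x).add hc
  · refine Eventually.of_forall fun j => ?_
    gcongr
    exact (le_max_left _ _).trans
      (max_neg_le_of_antitone_of_tendsto hanti hlim (by omega) (hk _ (by omega)) x)
  · filter_upwards [eventually_ge_atTop (l + 1)] with j hj
    exact hle j (l + 1) (Finset.mem_Icc.2 ⟨hl1, hj⟩) x

end DecreasingApproximation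

theorem diagonal_extraction_decreasing_approximation
    {X : Type*} [TopologicalSpace X] [CompactSpace X] (φ : X → ℝ)
    (ψ : ℕ → ℕ → X → ℝ)
    (hcont : ∀ j, 1 ≤ j → ∀ k, 1 ≤ k → Continuous (ψ j k))
    (hanti : ∀ j, 1 ≤ j → ∀ x : X, ∀ k l : ℕ, 1 ≤ k → k ≤ l → ψ j l x ≤ ψ j k x)
    (hlim : ∀ j, 1 ≤ j → ∀ x : X,
      Tendsto (fun k => ψ j k x) atTop (nhds (max (φ x) (-(j : ℝ))))) :
    ∃ k : ℕ → ℕ, StrictMono k ∧ (∀ j, 1 ≤ j → 1 ≤ k j) ∧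
      (∀ j, 1 ≤ j → ∀ x : X,
        ψ (j + 1) (k (j + 1)) x + ((2 : ℝ) ^ (j + 1))⁻¹ ≤ ψ j (k j) x + ((2 : ℝ) ^ j)⁻¹) ∧
      (∀ x : X, Tendsto (fun j => ψ j (k j) x + ((2 : ℝ) ^ j)⁻¹) atTop (nhds (φ x))) := by
  obtain ⟨k, hk_mono, hk_step⟩ := exists_strictMono_forall_rel_succ_of_eventually
    (eventually_imp_forall_add_inv_two_pow_le hcont hanti hlim)
  have hk_pos : ∀ j, 1 ≤ j → 1 ≤ k j := fun j hj => hj.trans (hk_mono.id_le j)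
  refine ⟨k, hk_mono, hk_pos, fun j hj => (hk_step j hj (hk_pos j hj)).1,
    tendsto_add_inv_two_pow_of_le hanti hlim hk_pos fun j l hl => ?_⟩
  have hj : 1 ≤ j := (Finset.mem_Icc.1 hl).1.trans (Finset.mem_Icc.1 hl).2
  exact (hk_step j hj (hk_pos j hj)).2 l hl
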